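/- Let $(p_j)$ be positive, non-increasing, summable frequencies such that $\lim_{j\to\infty} p_{j+1}/p_j = 1/2$. Then $V(t) = \sum_{j=1}^\infty (e^{-tp_j} - e^{-2tp_j}) \to 1$ as $t \to \infty$. -/

import Mathlib

/-!
Split each term as `(e^{-t p_j} - e^{-2t p_{j+1}}) + (e^{-2t p_{j+1}} - e^{-2t p_j})`.
The second parts telescope to `1 - e^{-2t p_0} → 1`. Once `|2p_{j+1} - p_j| ≤ ε p_j`, the first
parts are at most `ε/(1-ε) · x_j e^{-x_j}` with `x_j = (1-ε) t p_j`; since `x_j` decays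
geometrically, `∑ x_j e^{-x_j}` is bounded independently of `t`, so these tails are `O(ε)`,
while the finitely many remaining terms tend to `0`.
-/

open Real Filter Topology Finset

lemma sub_mul_exp_neg_le_exp_neg_sub_exp_neg (x y : ℝ) :
    (x - y) * exp (-x) ≤ exp (-y) - exp (-x) := by
  have hexp : exp (-y) = exp (-x) * exp (x - y) := by rw [← exp_add]; ring_nf
  nlinarith [add_one_le_exp (x - y), exp_pos (-x)]

lemma abs_exp_neg_sub_exp_neg_le {a b c : ℝ} (hca : c ≤ a) (hcb : c ≤ b) :
    |exp (-a) - exp (-b)| ≤ |a - b| * exp (-c) := by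
  wlog hab : a ≤ b generalizing a b
  · rw [abs_sub_comm, abs_sub_comm a]
    exact this hcb hca (le_of_not_ge hab)
  rw [abs_of_nonneg (sub_nonneg.2 (exp_le_exp.2 (neg_le_neg hab))),
    abs_of_nonpos (sub_nonpos.2 hab)]
  calc exp (-a) - exp (-b) ≤ (b - a) * exp (-a) := by
        linarith [sub_mul_exp_neg_le_exp_neg_sub_exp_neg a b]
    _ ≤ -(a - b) * exp (-c) := by
        rw [neg_sub]
        exact mul_le_mul_of_nonneg_left (exp_le_exp.2 (neg_le_neg hca)) (sub_nonneg.2 hab)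

lemma abs_exp_neg_sub_exp_neg_le_of_abs_sub_le {a b ε : ℝ} (hab : |b - a| ≤ ε * a) :
    |exp (-a) - exp (-b)| ≤ ε * a * exp (-((1 - ε) * a)) := by
  have hεa : 0 ≤ ε * a := (abs_nonneg _).trans hab
  obtain ⟨hlo, -⟩ := abs_le.1 hab
  calc |exp (-a) - exp (-b)| ≤ |a - b| * exp (-((1 - ε) * a)) :=
        abs_exp_neg_sub_exp_neg_le (by linarith) (by linarith)
    _ ≤ ε * a * exp (-((1 - ε) * a)) := by
        rw [abs_sub_comm]
        exact mul_le_mul_of_nonneg_right hab (exp_nonneg _)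

lemma tendsto_exp_neg_mul_atTop {c : ℝ} (hc : 0 < c) :
    Tendsto (fun t ↦ exp (-(t * c))) atTop (𝓝 0) :=
  tendsto_exp_neg_atTop_nhds_zero.comp (tendsto_id.atTop_mul_const hc)

lemma tendsto_exp_neg_two_mul_atTop {c : ℝ} (hc : 0 < c) :
    Tendsto (fun t ↦ exp (-(2 * t * c))) atTop (𝓝 0) :=
  (tendsto_exp_neg_mul_atTop (mul_pos two_pos hc)).congr fun t ↦ by rw [mul_comm 2 t, mul_assoc]

lemma summable_exp_neg_sub_exp_neg {a b : ℕ → ℝ} (ha : Summable a) (hb : Summable b)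
    (ha0 : ∀ j, 0 ≤ a j) (hb0 : ∀ j, 0 ≤ b j) :
    Summable fun j ↦ exp (-a j) - exp (-b j) := by
  refine (ha.add hb).of_norm_bounded fun j ↦ ?_
  have h := abs_exp_neg_sub_exp_neg_le (ha0 j) (hb0 j)
  rw [neg_zero, exp_zero, mul_one] at h
  rw [Real.norm_eq_abs]
  exact h.trans (abs_sub_le_iff.2 ⟨by linarith [hb0 j], by linarith [ha0 j]⟩)

lemma hasSum_exp_neg_succ_sub_exp_neg {a : ℕ → ℝ} (ha : Summable a) (ha0 : ∀ j, 0 ≤ a j) :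
    HasSum (fun j ↦ exp (-a (j + 1)) - exp (-a j)) (1 - exp (-a 0)) := by
  rw [(summable_exp_neg_sub_exp_neg ((summable_nat_add_iff 1).2 ha) ha (fun j ↦ ha0 _)
    ha0).hasSum_iff_tendsto_nat]
  simp only [sum_range_sub (fun j ↦ exp (-a j))]
  have hlim : Tendsto (fun n ↦ exp (-a n)) atTop (𝓝 1) :=
    tendsto_exp_nhds_zero_nhds_one.comp (by simpa using ha.tendsto_atTop_zero.neg)
  exact hlim.sub_const _

lemma sum_range_mul_exp_neg_le {x : ℕ → ℝ} {c : ℝ} (hc : c < 1) (hx : ∀ j, 0 ≤ x j)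
    (hdecay : ∀ j, x (j + 1) ≤ c * x j) (n : ℕ) :
    ∑ j ∈ range n, x j * exp (-x j) ≤ (1 - c)⁻¹ := by
  have hterm : ∀ j, (1 - c) * (x j * exp (-x j)) ≤ exp (-x (j + 1)) - exp (-x j) := fun j ↦
    calc (1 - c) * (x j * exp (-x j)) ≤ (x j - x (j + 1)) * exp (-x j) := by
          rw [← mul_assoc]
          exact mul_le_mul_of_nonneg_right (by linarith [hdecay j]) (exp_nonneg _)
      _ ≤ exp (-x (j + 1)) - exp (-x j) := sub_mul_exp_neg_le_exp_neg_sub_exp_neg _ _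
  have htelescope : (1 - c) * ∑ j ∈ range n, x j * exp (-x j) ≤ 1 :=
    calc (1 - c) * ∑ j ∈ range n, x j * exp (-x j)
        ≤ ∑ j ∈ range n, (exp (-x (j + 1)) - exp (-x j)) := by
          rw [mul_sum]; exact sum_le_sum fun j _ ↦ hterm j
      _ = exp (-x n) - exp (-x 0) := sum_range_sub (fun j ↦ exp (-x j)) n
      _ ≤ 1 := by
          linarith [exp_le_one_iff.2 (neg_nonpos.2 (hx n)), exp_pos (-x 0)]
  rw [← one_div, le_div_iff₀ (by linarith)]
  linarith

lemma tsum_abs_exp_neg_sub_exp_neg_two_mul_succ_le {p : ℕ → ℝ} {ε t : ℝ}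
    (hp : ∀ j, 0 ≤ p j) (hε0 : 0 ≤ ε) (hε1 : ε < 1) (ht : 0 ≤ t)
    (hclose : ∀ j, |2 * p (j + 1) - p j| ≤ ε * p j) :
    ∑' j, |exp (-(t * p j)) - exp (-(2 * t * p (j + 1)))| ≤ 2 * ε / (1 - ε) ^ 2 := by
  set x : ℕ → ℝ := fun j ↦ (1 - ε) * (t * p j)
  have hx : ∀ j, 0 ≤ x j := fun j ↦ by have := hp j; positivity
  have hdecay : ∀ j, x (j + 1) ≤ (1 + ε) / 2 * x j := fun j ↦ by
    have h2 : 2 * p (j + 1) ≤ (1 + ε) * p j := by linarith [(abs_le.1 (hclose j)).2]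
    have h1ε : 0 ≤ (1 - ε) * t := by nlinarith
    calc x (j + 1) = (1 - ε) * t / 2 * (2 * p (j + 1)) := by ring
      _ ≤ (1 - ε) * t / 2 * ((1 + ε) * p j) := by gcongr
      _ = (1 + ε) / 2 * x j := by ring
  have hterm : ∀ j, |exp (-(t * p j)) - exp (-(2 * t * p (j + 1)))|
      ≤ ε / (1 - ε) * (x j * exp (-x j)) := fun j ↦ by
    have hab : |2 * t * p (j + 1) - t * p j| ≤ ε * (t * p j) := by
      rw [show 2 * t * p (j + 1) - t * p j = t * (2 * p (j + 1) - p j) by ring, abs_mul,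
        abs_of_nonneg ht, mul_left_comm]
      exact mul_le_mul_of_nonneg_left (hclose j) ht
    refine (abs_exp_neg_sub_exp_neg_le_of_abs_sub_le hab).trans_eq ?_
    rw [show x j = (1 - ε) * (t * p j) from rfl]
    field_simp [show (1 - ε) ≠ 0 by linarith]
  refine Real.tsum_le_of_sum_range_le (fun _ ↦ abs_nonneg _) fun n ↦ ?_
  calc ∑ j ∈ range n, |exp (-(t * p j)) - exp (-(2 * t * p (j + 1)))|
      ≤ ε / (1 - ε) * ∑ j ∈ range n, x j * exp (-x j) := by
        rw [mul_sum]; exact sum_le_sum fun j _ ↦ hterm j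
    _ ≤ ε / (1 - ε) * (1 - (1 + ε) / 2)⁻¹ :=
        mul_le_mul_of_nonneg_left (sum_range_mul_exp_neg_le (by linarith) hx hdecay n)
          (div_nonneg hε0 (by linarith))
    _ = 2 * ε / (1 - ε) ^ 2 := by
        rw [show (1 : ℝ) - (1 + ε) / 2 = (1 - ε) / 2 by ring]
        field_simp [show (1 - ε) ≠ 0 by linarith]

lemma eventually_abs_two_mul_succ_sub_le {p : ℕ → ℝ} (hpos : ∀ j, 0 < p j)
    (hratio : Tendsto (fun j ↦ p (j + 1) / p j) atTop (𝓝 (1 / 2))) {ε : ℝ} (hε : 0 < ε) :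
    ∀ᶠ j in atTop, |2 * p (j + 1) - p j| ≤ ε * p j := by
  have hlim : Tendsto (fun j ↦ 2 * (p (j + 1) / p j) - 1) atTop (𝓝 0) := by
    simpa using (hratio.const_mul 2).sub_const 1
  filter_upwards [hlim.eventually (Metric.closedBall_mem_nhds 0 hε)] with j hj
  rw [dist_zero_right, Real.norm_eq_abs] at hj
  rw [show 2 * p (j + 1) - p j = (2 * (p (j + 1) / p j) - 1) * p j by
    field_simp [(hpos j).ne'], abs_mul, abs_of_pos (hpos j)]
  exact mul_le_mul_of_nonneg_right hj (hpos j).le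

lemma tsum_exp_neg_sub_exp_neg_two_mul_eq {p : ℕ → ℝ} (hp : ∀ j, 0 ≤ p j) (hsum : Summable p)
    {t : ℝ} (ht : 0 ≤ t) :
    ∑' j, (exp (-(t * p j)) - exp (-(2 * t * p j))) =
      (1 - exp (-(2 * t * p 0))) + ∑' j, (exp (-(t * p j)) - exp (-(2 * t * p (j + 1)))) := by
  have htelescope := hasSum_exp_neg_succ_sub_exp_neg (a := fun j ↦ 2 * t * p j)
    (hsum.mul_left _) fun j ↦ by have := hp j; positivity
  have herror := summable_exp_neg_sub_exp_neg (a := fun j ↦ t * p j)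
    (b := fun j ↦ 2 * t * p (j + 1)) (hsum.mul_left _)
    (((summable_nat_add_iff 1).2 hsum).mul_left _)
    (fun j ↦ by have := hp j; positivity) fun j ↦ by have := hp (j + 1); positivity
  rw [← htelescope.tsum_eq, ← htelescope.summable.tsum_add herror]
  exact tsum_congr fun j ↦ by ring

lemma tendsto_tsum_exp_neg_sub_exp_neg_two_mul_succ {p : ℕ → ℝ} (hpos : ∀ j, 0 < p j)
    (hsum : Summable p) (hratio : Tendsto (fun j ↦ p (j + 1) / p j) atTop (𝓝 (1 / 2))) :
    Tendsto (fun t ↦ ∑' j, (exp (-(t * p j)) - exp (-(2 * t * p (j + 1))))) atTop (𝓝 0) := by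
  rw [Metric.tendsto_nhds]
  intro δ hδ
  obtain ⟨ε, hε0, hε1, hεδ⟩ : ∃ ε : ℝ, 0 < ε ∧ ε ≤ 1 / 2 ∧ 8 * ε ≤ δ / 2 :=
    ⟨min (δ / 16) (1 / 2), lt_min (by linarith) one_half_pos, min_le_right _ _,
      by linarith [min_le_left (δ / 16) (1 / 2)]⟩
  obtain ⟨J, hJ⟩ := eventually_atTop.1 (eventually_abs_two_mul_succ_sub_le hpos hratio hε0)
  set r : ℝ → ℕ → ℝ := fun t j ↦ |exp (-(t * p j)) - exp (-(2 * t * p (j + 1)))|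
  have hhead : Tendsto (fun t ↦ ∑ j ∈ range J, r t j) atTop (𝓝 0) := by
    simpa using tendsto_finsetSum (range J) fun j _ ↦
      ((tendsto_exp_neg_mul_atTop (hpos j)).sub
        (tendsto_exp_neg_two_mul_atTop (hpos (j + 1)))).abs
  filter_upwards [hhead.eventually (gt_mem_nhds (half_pos hδ)), eventually_ge_atTop 0]
    with t hhead_small ht
  have htail : ∑' j, r t (j + J) ≤ δ / 2 := by
    have h := tsum_abs_exp_neg_sub_exp_neg_two_mul_succ_le (p := fun j ↦ p (j + J))
      (fun j ↦ (hpos _).le) hε0.le (by linarith) ht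
      fun j ↦ by simpa only [Nat.add_right_comm _ 1 J] using hJ (j + J) (Nat.le_add_left J j)
    simp only [Nat.add_right_comm _ 1 J] at h
    calc ∑' j, r t (j + J) ≤ 2 * ε / (1 - ε) ^ 2 := h
      _ ≤ 8 * ε := by
          have hsq : 1 / 4 ≤ (1 - ε) ^ 2 := by nlinarith
          rw [div_le_iff₀ (by linarith)]
          nlinarith [mul_le_mul_of_nonneg_left hsq hε0.le]
      _ ≤ δ / 2 := hεδ
  have hr : Summable (r t) := (summable_exp_neg_sub_exp_neg (hsum.mul_left t)
    (((summable_nat_add_iff 1).2 hsum).mul_left (2 * t)) (fun j ↦ mul_nonneg ht (hpos j).le)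
    fun j ↦ by have := hpos (j + 1); positivity).abs
  rw [dist_zero_right]
  calc ‖∑' j, (exp (-(t * p j)) - exp (-(2 * t * p (j + 1))))‖ ≤ ∑' j, r t j :=
        norm_tsum_le_tsum_norm hr
    _ = ∑ j ∈ range J, r t j + ∑' j, r t (j + J) := (hr.sum_add_tsum_nat_add J).symm
    _ < δ / 2 + δ / 2 := add_lt_add_of_lt_of_le hhead_small htail
    _ = δ := add_halves δ

theorem stmt14 (p : ℕ → ℝ) (hpos : ∀ j, 0 < p j)
    (hsum : Summable p)
    (hratio : Tendsto (fun j : ℕ => p (j + 1) / p j) atTop (nhds (1 / 2))) :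
    Tendsto (fun t : ℝ => ∑' j : ℕ, (Real.exp (-(t * p j)) - Real.exp (-(2 * t * p j))))
      atTop (nhds 1) := by
  have hlim := ((tendsto_exp_neg_two_mul_atTop (hpos 0)).const_sub 1).add
    (tendsto_tsum_exp_neg_sub_exp_neg_two_mul_succ hpos hsum hratio)
  rw [sub_zero, add_zero] at hlim
  refine hlim.congr' ?_
  filter_upwards [eventually_ge_atTop 0] with t ht
  exact (tsum_exp_neg_sub_exp_neg_two_mul_eq (fun j ↦ (hpos j).le) hsum ht).symm
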